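/- In any Ω^ω-tree of size n, the number of internal nodes on the backbone path (the path of internal nodes realizing the tree's depth) is at least (n-ω)/(ω+1). -/

import Mathlib

/-!
Common definitions: plane (ordered) labeled binary trees, the flip relation
generating the "unordered" identification, ranked trees, Ω-trees, and counts.
-/

/-- Plane rooted binary trees whose internal nodes carry a label. -/
inductive PTree : Type where
  | leaf : PTree
  | node : ℕ → PTree → PTree → PTree
deriving DecidableEq

namespace PTree

/-- Size: the number of internal nodes. -/
def size : PTree → ℕ
  | leaf => 0
  | node _ l r => l.size + r.size + 1

/-- Number of cherries: internal nodes whose two children are leaves. -/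
def cherries : PTree → ℕ
  | leaf => 0
  | node _ leaf leaf => 1
  | node _ l r => l.cherries + r.cherries

/-- Multiset of labels of internal nodes. -/
def labels : PTree → Multiset ℕ
  | leaf => 0
  | node k l r => k ::ₘ (l.labels + r.labels)

/-- Labels increase away from the root: each internal node's label is smaller
than all labels in its subtrees. -/
def Incr : PTree → Prop
  | leaf => True
  | node k l r =>
      (∀ m ∈ l.labels, k < m) ∧ (∀ m ∈ r.labels, k < m) ∧ Incr l ∧ Incr r

/-- A ranked tree of size `n`: labels increase from the root and the internal
labels are exactly `{1, …, n}` (each occurring once). -/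
def IsRanked (n : ℕ) (t : PTree) : Prop :=
  t.Incr ∧ t.labels = (Finset.Icc 1 n).val

/-- The Ω-condition: at every internal node, the smaller of the two child
subtrees has at most `ω` internal nodes. -/
def OmegaOK (ω : ℕ) : PTree → Prop
  | leaf => True
  | node _ l r => min l.size r.size ≤ ω ∧ OmegaOK ω l ∧ OmegaOK ω r

/-- One-step flip: swap the two children of some internal node. -/
inductive Flip : PTree → PTree → Prop
  | swap (k : ℕ) (l r : PTree) : Flip (node k l r) (node k r l)
  | congL {l l' : PTree} (k : ℕ) (r : PTree) : Flip l l' → Flip (node k l r) (node k l' r)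
  | congR {r r' : PTree} (k : ℕ) (l : PTree) : Flip r r' → Flip (node k l r) (node k l r')

end PTree

/-- Setoid on trees satisfying `P`, identifying trees up to swapping children
(so that left/right order is immaterial). -/
def treeSetoid (P : PTree → Prop) : Setoid {t : PTree // P t} :=
  Relation.EqvGen.setoid (fun a b => PTree.Flip a.1 b.1)

/-- `|R_n|` : the number of ranked trees (histories) of size `n`. -/
noncomputable def rankedCount (n : ℕ) : ℕ :=
  Nat.card (Quotient (treeSetoid (PTree.IsRanked n)))

/-- `e_{n,l}` : the number of ranked trees of size `n` with `l` cherries. -/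
noncomputable def rankedCountC (n l : ℕ) : ℕ :=
  Nat.card (Quotient (treeSetoid (fun t => PTree.IsRanked n t ∧ t.cherries = l)))

/-- `|Ω^ω_n|` : the number of Ω^ω-trees of size `n`. -/
noncomputable def omegaCount (ω n : ℕ) : ℕ :=
  Nat.card (Quotient (treeSetoid (fun t => PTree.IsRanked n t ∧ PTree.OmegaOK ω t)))

/-- `|Ω^ω_{n,l}|` : the number of Ω^ω-trees of size `n` with `l` cherries. -/
noncomputable def omegaCountC (ω n l : ℕ) : ℕ :=
  Nat.card (Quotient (treeSetoid
    (fun t => PTree.IsRanked n t ∧ PTree.OmegaOK ω t ∧ t.cherries = l)))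

namespace PTree
/-- Depth: number of edges of a longest root-to-leaf path. Since every node on
such a path except the final leaf is internal, `depth t` is exactly the number
of internal nodes on the backbone path. -/
def depth : PTree → ℕ
  | leaf => 0
  | node _ l r => max l.depth r.depth + 1
end PTree

namespace PTree

theorem card_labels (t : PTree) : Multiset.card t.labels = t.size := by
  induction t with
  | leaf => rfl
  | node _ l r hl hr => simp [labels, size, hl, hr]

theorem IsRanked.size_eq {n : ℕ} {t : PTree} (ht : t.IsRanked n) : t.size = n := by
  rw [← card_labels, ht.2]
  simp

/-- Each unit of depth accounts for at most `ω + 1` nodes: a node together with its smaller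
child, the recursion continuing into the other child. -/
theorem OmegaOK.size_le {ω : ℕ} {t : PTree} (h : t.OmegaOK ω) :
    t.size ≤ (ω + 1) * t.depth + ω := by
  induction t with
  | leaf => simp [size]
  | node _ l r ihl ihr =>
    obtain ⟨hmin, hl, hr⟩ := h
    have hsize_l := ihl hl
    have hsize_r := ihr hr
    have hdepth_l := Nat.mul_le_mul_left (ω + 1) (le_max_left l.depth r.depth)
    have hdepth_r := Nat.mul_le_mul_left (ω + 1) (le_max_right l.depth r.depth)
    simp only [size, depth, Nat.mul_succ]
    omega

end PTree

/-- in any Ω^ω-tree of size `n`, the number of internal nodes on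
the backbone path (i.e. the depth) is at least `(n-ω)/(ω+1)`. -/
theorem backbone_length_lower_bound (ω n : ℕ) (t : PTree)
    (ht : PTree.IsRanked n t) (hΩ : PTree.OmegaOK ω t) :
    ((n : ℝ) - ω) / (ω + 1) ≤ (t.depth : ℝ) := by
  have hsize : (n : ℝ) ≤ (ω + 1) * t.depth + ω := by
    exact_mod_cast ht.size_eq ▸ hΩ.size_le
  rw [div_le_iff₀ (by positivity)]
  linarith
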